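/- Let X ⊆ ℝ^d be convex and compact with X ⊆ B_R(0). Let s ∈ ℝ^d, let v ∈ argmin_{x ∈ X} ⟨x, s⟩, and let x*, x_a ∈ X. Let F be convex and differentiable with gradient g = ∇F(x_a), and let g' ∈ ℝ^d. Then (1/n)⟨g', v − x_a⟩ ≤ (2R/n)‖g' − g‖ + 4R‖(1/n)g − s‖ + (1/n)(F(x*) − F(x_a)). -/

import Mathlib

open Filter Topology

lemma grad_convex_ineq {d : ℕ} {X : Set (EuclideanSpace ℝ (Fin d))}
    {F : EuclideanSpace ℝ (Fin d) → ℝ} (hF : ConvexOn ℝ X F)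
    {g xa x : EuclideanSpace ℝ (Fin d)} (hg : HasGradientAt F g xa)
    (hxa : xa ∈ X) (hx : x ∈ X) :
    (inner ℝ g (x - xa) : ℝ) ≤ F x - F xa := by
  set u := x - xa with hu
  have hline : HasDerivAt (fun t : ℝ => F (xa + t • u)) (inner ℝ g u : ℝ) 0 := by
    have h1 : HasDerivAt (fun t : ℝ => xa + t • u) u 0 := by
      simpa using ((hasDerivAt_id (0:ℝ)).smul_const u).const_add xa
    have hg' : HasFDerivAt F ((InnerProductSpace.toDual ℝ _) g) (xa + (0:ℝ) • u) := by
      simpa using hg.hasFDerivAt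
    exact (by simpa [real_inner_comm] using hg'.comp_hasDerivAt 0 h1 :
      HasDerivAt (F ∘ fun t : ℝ => xa + t • u) (inner ℝ g u : ℝ) 0)
  have hslope : ∀ t : ℝ, t ∈ Set.Ioc (0:ℝ) 1 →
      slope (fun t : ℝ => F (xa + t • u)) 0 t ≤ F x - F xa := by
    intro t ht
    have hmem : xa + t • u = t • x + (1 - t) • xa := by
      simp [hu, smul_sub, sub_smul]; abel
    have hF' : F (t • x + (1 - t) • xa) ≤ t * F x + (1 - t) * F xa := by
      simpa [smul_eq_mul] using hF.2 hx hxa ht.1.le (by linarith [ht.2]) (by ring)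
    rw [slope_def_field]
    simp only [zero_smul, add_zero, sub_zero]
    rw [div_le_iff₀ ht.1, hmem]
    nlinarith [hF']
  have htend := hasDerivAt_iff_tendsto_slope.1 hline
  have htend' : Tendsto (slope (fun t : ℝ => F (xa + t • u)) 0) (𝓝[>] 0)
      (𝓝 (inner ℝ g u : ℝ)) := htend.mono_left (nhdsWithin_mono _ (fun t ht => ne_of_gt ht))
  refine le_of_tendsto htend' ?_
  filter_upwards [Ioc_mem_nhdsGT_of_mem (by simp : (0:ℝ) ∈ Set.Ico (0:ℝ) 1)] with t ht
  exact hslope t ht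

/-- Frank–Wolfe linear-oracle decomposition inequality (equation (14)). -/
theorem stmt_10 {d : ℕ} (X : Set (EuclideanSpace ℝ (Fin d)))
    (hXconv : Convex ℝ X) (hXcomp : IsCompact X)
    (R : ℝ) (hR : 0 < R) (hXball : X ⊆ Metric.closedBall 0 R)
    (s v : EuclideanSpace ℝ (Fin d))
    (hvX : v ∈ X) (hvmin : ∀ x ∈ X, (inner ℝ v s : ℝ) ≤ (inner ℝ x s : ℝ))
    (xstar xa : EuclideanSpace ℝ (Fin d)) (hxstar : xstar ∈ X) (hxa : xa ∈ X)
    (F : EuclideanSpace ℝ (Fin d) → ℝ) (hF : ConvexOn ℝ X F)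
    (g : EuclideanSpace ℝ (Fin d)) (hg : HasGradientAt F g xa)
    (g' : EuclideanSpace ℝ (Fin d)) (n : ℝ) (hn : 0 < n) :
    (1 / n) * (inner ℝ g' (v - xa) : ℝ)
      ≤ (2 * R / n) * ‖g' - g‖ + 4 * R * ‖(1 / n) • g - s‖
        + (1 / n) * (F xstar - F xa) := by
  have hnorm : ∀ a ∈ X, ‖a‖ ≤ R := fun a ha => by
    simpa [mem_closedBall_zero_iff] using hXball ha
  have h2R : ∀ a ∈ X, ∀ b ∈ X, ‖a - b‖ ≤ 2 * R := fun a ha b hb =>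
    (norm_sub_le a b).trans (by linarith [hnorm a ha, hnorm b hb])
  have hva : ‖v - xa‖ ≤ 2 * R := h2R v hvX xa hxa
  have hsa : ‖xstar - xa‖ ≤ 2 * R := h2R xstar hxstar xa hxa
  -- decomposition identities
  have key : (1/n) * (inner ℝ g' (v - xa) : ℝ)
      = (1/n) * (inner ℝ (g' - g) (v - xa) : ℝ)
        + (inner ℝ ((1/n) • g - s) (v - xa) : ℝ) + (inner ℝ s (v - xa) : ℝ) := by
    rw [inner_sub_left, inner_sub_left, real_inner_smul_left]; ring
  have key2 : (inner ℝ s (xstar - xa) : ℝ)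
      = (1/n) * (inner ℝ g (xstar - xa) : ℝ)
        - (inner ℝ ((1/n) • g - s) (xstar - xa) : ℝ) := by
    rw [inner_sub_left, real_inner_smul_left]; ring
  have hmin : (inner ℝ s (v - xa) : ℝ) ≤ (inner ℝ s (xstar - xa) : ℝ) := by
    have := hvmin xstar hxstar
    simp only [inner_sub_right]
    have h1 : (inner ℝ s v : ℝ) ≤ (inner ℝ s xstar : ℝ) := by
      rw [real_inner_comm, real_inner_comm xstar s]; exact this
    linarith
  have t1 : (inner ℝ (g' - g) (v - xa) : ℝ) ≤ ‖g' - g‖ * (2 * R) :=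
    (real_inner_le_norm _ _).trans
      (mul_le_mul_of_nonneg_left hva (norm_nonneg _))
  have t2 : (inner ℝ ((1/n) • g - s) (v - xa) : ℝ) ≤ ‖(1/n) • g - s‖ * (2 * R) :=
    (real_inner_le_norm _ _).trans
      (mul_le_mul_of_nonneg_left hva (norm_nonneg _))
  have t4 : -(inner ℝ ((1/n) • g - s) (xstar - xa) : ℝ) ≤ ‖(1/n) • g - s‖ * (2 * R) := by
    have := (real_inner_le_norm ((1/n) • g - s) (xa - xstar)).trans
      (mul_le_mul_of_nonneg_left (h2R xa hxa xstar hxstar) (norm_nonneg _))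
    have heq : (inner ℝ ((1/n) • g - s) (xa - xstar) : ℝ)
        = -(inner ℝ ((1/n) • g - s) (xstar - xa) : ℝ) := by
      rw [← inner_neg_right]; congr 1; abel
    linarith [heq ▸ this]
  have t5 : (inner ℝ g (xstar - xa) : ℝ) ≤ F xstar - F xa :=
    grad_convex_ineq hF hg hxa hxstar
  have hninv : (0:ℝ) < 1/n := by positivity
  have t1' : (1/n) * (inner ℝ (g' - g) (v - xa) : ℝ) ≤ (2 * R / n) * ‖g' - g‖ := by
    have := mul_le_mul_of_nonneg_left t1 hninv.le
    calc (1/n) * (inner ℝ (g' - g) (v - xa) : ℝ) ≤ (1/n) * (‖g' - g‖ * (2*R)) := this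
      _ = (2 * R / n) * ‖g' - g‖ := by ring
  have t5' : (1/n) * (inner ℝ g (xstar - xa) : ℝ) ≤ (1/n) * (F xstar - F xa) :=
    mul_le_mul_of_nonneg_left t5 hninv.le
  rw [key]
  have hmin' := hmin.trans_eq key2
  nlinarith [t1', t2, t4, t5', hmin']
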